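/- There exists a constant d > 0 such that for all real numbers a, b, λ, setting σ = (1 + 4a²)^{-1/2}, one has ∫_{−∞}^{−λ} Φ(a·x + b)·φ(x) dx ≥ d²·σ·exp(−2b² − λ²/σ²), and likewise ∫_{−λ}^{+∞} Φ(a·x + b)·φ(x) dx ≥ d²·σ·exp(−2b² − λ²/σ²). -/

import Mathlib

open MeasureTheory Real

/-- The standard normal density `φ(x) = (2π)^{-1/2} exp(−x²/2)`. -/
noncomputable def stdNormalPDF (x : ℝ) : ℝ :=
  (Real.sqrt (2 * Real.pi))⁻¹ * Real.exp (-x ^ 2 / 2)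

/-- The standard normal distribution function `Φ(x) = ∫_{−∞}^x φ(u) du`. -/
noncomputable def stdNormalCDF (x : ℝ) : ℝ :=
  ∫ u in Set.Iic x, stdNormalPDF u

/-!
Integrating `φ` over `[t - 1, t]` gives `Φ(t) ≥ φ(0) e^{-(1 + t²)}`. Put `S = 1 + 4a² = σ⁻²`.
Since `(ax + b)² + x²/2 ≤ 2b² + S x²/2` and `S x² ≤ 2 S (x + λ)² + 2 S λ² ≤ 2 + 2 S λ²` when
`|x + λ| ≤ σ`, the integrand `Φ(ax + b) φ(x)` is at least `φ(0)² e^{-2} e^{-2b² - λ²/σ²}` on the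
intervals `[-λ - σ, -λ]` and `[-λ, -λ + σ]`, both of length `σ`. So `d = φ(0) e^{-1}` works.
-/

open ProbabilityTheory

lemma stdNormalPDF_eq_gaussianPDFReal : stdNormalPDF = gaussianPDFReal 0 1 := by
  ext x
  simp [stdNormalPDF, gaussianPDFReal]

lemma stdNormalPDF_nonneg (x : ℝ) : 0 ≤ stdNormalPDF x := by
  rw [stdNormalPDF_eq_gaussianPDFReal]
  exact gaussianPDFReal_nonneg 0 1 x

lemma integrable_stdNormalPDF : Integrable stdNormalPDF := by
  rw [stdNormalPDF_eq_gaussianPDFReal]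
  exact integrable_gaussianPDFReal 0 1

lemma stdNormalCDF_nonneg (t : ℝ) : 0 ≤ stdNormalCDF t :=
  setIntegral_nonneg measurableSet_Iic fun x _ => stdNormalPDF_nonneg x

lemma stdNormalCDF_le_one (t : ℝ) : stdNormalCDF t ≤ 1 :=
  calc stdNormalCDF t ≤ ∫ x, stdNormalPDF x :=
        setIntegral_le_integral integrable_stdNormalPDF (ae_of_all _ stdNormalPDF_nonneg)
    _ = 1 := by rw [stdNormalPDF_eq_gaussianPDFReal, integral_gaussianPDFReal_eq_one 0 one_ne_zero]

lemma monotone_stdNormalCDF : Monotone stdNormalCDF := fun _ _ h =>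
  setIntegral_mono_set integrable_stdNormalPDF.integrableOn (ae_of_all _ stdNormalPDF_nonneg)
    (Set.Iic_subset_Iic.2 h).eventuallyLE

lemma mul_le_setIntegral_of_le_on_Icc {f : ℝ → ℝ} (hf : Integrable f) (hf_nonneg : ∀ x, 0 ≤ f x)
    {p q m : ℝ} (hpq : p ≤ q) (hm : ∀ x ∈ Set.Icc p q, m ≤ f x) {s : Set ℝ}
    (hs : Set.Icc p q ⊆ s) :
    (q - p) * m ≤ ∫ x in s, f x :=
  calc (q - p) * m = ∫ _ in Set.Icc p q, m := by
        rw [setIntegral_const, measureReal_def, volume_Icc, ENNReal.toReal_ofReal (by linarith),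
          smul_eq_mul]
    _ ≤ ∫ x in Set.Icc p q, f x :=
        setIntegral_mono_on (integrableOn_const measure_Icc_lt_top.ne) hf.integrableOn
          measurableSet_Icc hm
    _ ≤ ∫ x in s, f x :=
        setIntegral_mono_set hf.integrableOn (ae_of_all _ hf_nonneg) hs.eventuallyLE

lemma le_stdNormalCDF (t : ℝ) :
    (√(2 * π))⁻¹ * exp (-(1 + t ^ 2)) ≤ stdNormalCDF t := by
  have hpdf : ∀ x ∈ Set.Icc (t - 1) t, (√(2 * π))⁻¹ * exp (-(1 + t ^ 2)) ≤ stdNormalPDF x := by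
    rintro x ⟨hx₁, hx₂⟩
    refine mul_le_mul_of_nonneg_left (exp_le_exp.2 ?_) (by positivity)
    nlinarith [mul_nonneg (sub_nonneg.2 hx₂) (sub_nonneg.2 hx₁), sq_nonneg (x - 2 * t)]
  simpa [stdNormalCDF] using mul_le_setIntegral_of_le_on_Icc integrable_stdNormalPDF
    stdNormalPDF_nonneg (by linarith) hpdf Set.Icc_subset_Iic_self

lemma integrable_stdNormalCDF_comp_mul_stdNormalPDF (a b : ℝ) :
    Integrable fun x => stdNormalCDF (a * x + b) * stdNormalPDF x := by
  refine integrable_stdNormalPDF.mono ?_ (ae_of_all _ fun x => ?_)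
  · exact ((monotone_stdNormalCDF.measurable.comp (by fun_prop)).mul
      (by rw [stdNormalPDF_eq_gaussianPDFReal]; exact measurable_gaussianPDFReal 0 1)
      ).aestronglyMeasurable
  · rw [norm_mul, Real.norm_of_nonneg (stdNormalCDF_nonneg _)]
    exact mul_le_of_le_one_left (norm_nonneg _) (stdNormalCDF_le_one _)

lemma le_stdNormalCDF_comp_mul_stdNormalPDF (a b l x : ℝ)
    (hx : (x + l) ^ 2 * (1 + 4 * a ^ 2) ≤ 1) :
    ((√(2 * π))⁻¹ * exp (-1)) ^ 2 * exp (-2 * b ^ 2 - l ^ 2 * (1 + 4 * a ^ 2))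
      ≤ stdNormalCDF (a * x + b) * stdNormalPDF x := by
  have hexp :
      -2 + (-2 * b ^ 2 - l ^ 2 * (1 + 4 * a ^ 2)) ≤ -(1 + (a * x + b) ^ 2) + -x ^ 2 / 2 := by
    nlinarith [sq_nonneg (a * x - b), sq_nonneg (x + 2 * l), sq_nonneg a,
      mul_nonneg (sq_nonneg a) (sq_nonneg (x + 2 * l))]
  calc ((√(2 * π))⁻¹ * exp (-1)) ^ 2 * exp (-2 * b ^ 2 - l ^ 2 * (1 + 4 * a ^ 2))
      = (√(2 * π))⁻¹ ^ 2 * exp (-2 + (-2 * b ^ 2 - l ^ 2 * (1 + 4 * a ^ 2))) := by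
        rw [exp_add, mul_pow, ← exp_nat_mul]; ring_nf
    _ ≤ (√(2 * π))⁻¹ ^ 2 * exp (-(1 + (a * x + b) ^ 2) + -x ^ 2 / 2) := by gcongr
    _ = (√(2 * π))⁻¹ * exp (-(1 + (a * x + b) ^ 2)) * stdNormalPDF x := by
        rw [stdNormalPDF, exp_add]; ring
    _ ≤ stdNormalCDF (a * x + b) * stdNormalPDF x :=
        mul_le_mul_of_nonneg_right (le_stdNormalCDF _) (stdNormalPDF_nonneg x)

/-- There is a constant `d > 0` such that for all reals `a, b, λ`, with
`σ = (1 + 4a²)^{-1/2}`, one has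
`∫_{−∞}^{−λ} Φ(a·x + b)·φ(x) dx ≥ d²·σ·exp(−2b² − λ²/σ²)`, and likewise for the
integral over `[−λ, ∞)`. -/
theorem stmt6 :
    ∃ d : ℝ, 0 < d ∧
      ∀ a b l : ℝ,
        (d ^ 2 * (Real.sqrt (1 + 4 * a ^ 2))⁻¹ *
            Real.exp (-2 * b ^ 2 - l ^ 2 / ((Real.sqrt (1 + 4 * a ^ 2))⁻¹) ^ 2)
          ≤ ∫ x in Set.Iic (-l), stdNormalCDF (a * x + b) * stdNormalPDF x) ∧
        (d ^ 2 * (Real.sqrt (1 + 4 * a ^ 2))⁻¹ *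
            Real.exp (-2 * b ^ 2 - l ^ 2 / ((Real.sqrt (1 + 4 * a ^ 2))⁻¹) ^ 2)
          ≤ ∫ x in Set.Ici (-l), stdNormalCDF (a * x + b) * stdNormalPDF x) := by
  refine ⟨(√(2 * π))⁻¹ * exp (-1), by positivity, fun a b l => ?_⟩
  set S := 1 + 4 * a ^ 2
  set σ := (√S)⁻¹
  have hS : 0 < S := by positivity
  have hσ : 0 < σ := by positivity
  have hσS : σ ^ 2 * S = 1 := by
    rw [inv_pow, sq_sqrt hS.le, inv_mul_cancel₀ hS.ne']
  have hexp : l ^ 2 / σ ^ 2 = l ^ 2 * S := by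
    rw [div_eq_iff (by positivity), mul_assoc, mul_comm S, hσS, mul_one]
  have hnear : ∀ x ∈ Set.Icc (-l - σ) (-l + σ), _ := fun x ⟨hx₁, hx₂⟩ =>
    have hx : (x + l) ^ 2 ≤ σ ^ 2 := by nlinarith
    le_stdNormalCDF_comp_mul_stdNormalPDF a b l x <|
      calc (x + l) ^ 2 * S ≤ σ ^ 2 * S := by gcongr
        _ = 1 := hσS
  have hint := integrable_stdNormalCDF_comp_mul_stdNormalPDF a b
  have hnonneg x := mul_nonneg (stdNormalCDF_nonneg (a * x + b)) (stdNormalPDF_nonneg x)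
  rw [hexp]
  constructor
  · convert mul_le_setIntegral_of_le_on_Icc hint hnonneg (by linarith : -l - σ ≤ -l)
      (fun x hx => hnear x (Set.Icc_subset_Icc_right (by linarith) hx)) Set.Icc_subset_Iic_self
      using 1
    ring
  · convert mul_le_setIntegral_of_le_on_Icc hint hnonneg (by linarith : -l ≤ -l + σ)
      (fun x hx => hnear x (Set.Icc_subset_Icc_left (by linarith) hx)) Set.Icc_subset_Ici_self
      using 1
    ring
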